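/- arXiv:2006.09365 — 6 statements merged into one kernel-verified Lean document; each statement's English description precedes it below -/
import Mathlib

section
/- Let y_1,…,y_m be vectors in a real Hilbert space, let {1,…,m} = G̃ ⊎ B̃ be a partition with |G̃| > |B̃|, and let y* be any minimizer of v ↦ Σ_{i=1}^m ‖v − y_i‖. Then for every point x̄ in the space, ‖y* − x̄‖ ≤ (2 / (|G̃| − |B̃|)) · Σ_{i∈G̃} ‖y_i − x̄‖. -/
/-!
Splitting `Σᵢ ‖y* - yᵢ‖` along `G̃ ⊎ B̃`, the triangle inequality through `x̄` bounds each good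
term below by `‖y* - x̄‖ - ‖yᵢ - x̄‖` and each bad term below by `‖yᵢ - x̄‖ - ‖y* - x̄‖`.
Comparing with the value of the objective at `x̄`, the bad distances `‖yᵢ - x̄‖` cancel and
`(|G̃| - |B̃|) ‖y* - x̄‖ ≤ 2 Σ_{i∈G̃} ‖yᵢ - x̄‖` remains.
-/

section

open Finset

variable {ι E : Type*} [SeminormedAddCommGroup E]

def IsGeometricMedian [Fintype ι] (y : ι → E) (a : E) : Prop :=
  ∀ v : E, ∑ i, ‖a - y i‖ ≤ ∑ i, ‖v - y i‖

theorem IsGeometricMedian.card_sub_card_compl_mul_norm_sub_le [Fintype ι] [DecidableEq ι]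
    {y : ι → E} {a : E} (ha : IsGeometricMedian y a) (s : Finset ι) (x : E) :
    ((#s : ℝ) - #sᶜ) * ‖a - x‖ ≤ 2 * ∑ i ∈ s, ‖y i - x‖ := by
  have good : #s • ‖a - x‖ ≤ ∑ i ∈ s, (‖a - y i‖ + ‖y i - x‖) :=
    card_nsmul_le_sum _ _ _ fun i _ => norm_sub_le_norm_sub_add_norm_sub _ _ _
  have bad : ∑ i ∈ sᶜ, (‖x - y i‖ - ‖a - y i‖) ≤ #sᶜ • ‖x - a‖ :=
    sum_le_card_nsmul _ _ _ fun i _ => by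
      simpa only [sub_sub_sub_cancel_right] using norm_sub_norm_le (x - y i) (a - y i)
  have at_x := ha x
  rw [← sum_add_sum_compl s, ← sum_add_sum_compl s fun i => ‖x - y i‖] at at_x
  simp only [sum_add_distrib, sum_sub_distrib, nsmul_eq_mul, norm_sub_rev x] at good bad at_x
  linarith

end

theorem geometric_median_deviation_general {H : Type*} [NormedAddCommGroup H]
    {m : ℕ} (y : Fin m → H) (Gt : Finset (Fin m))
    (hcard : (Gtᶜ).card < Gt.card)
    (ystar : H)
    (hmin : ∀ v : H, ∑ i, ‖ystar - y i‖ ≤ ∑ i, ‖v - y i‖)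
    (xbar : H) :
    ‖ystar - xbar‖ ≤
      (2 / ((Gt.card : ℝ) - ((Gtᶜ).card : ℝ))) * ∑ i ∈ Gt, ‖y i - xbar‖ := by
  have hpos : (0 : ℝ) < (Gt.card : ℝ) - ((Gtᶜ).card : ℝ) := sub_pos.mpr (by exact_mod_cast hcard)
  rw [div_mul_eq_mul_div, le_div_iff₀ hpos, mul_comm]
  exact IsGeometricMedian.card_sub_card_compl_mul_norm_sub_le hmin Gt xbar

/-- **Geometric median deviation bound (deterministic).**
If `y*` minimizes `v ↦ Σᵢ ‖v - yᵢ‖` over a real Hilbert space, and the index set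
`{1,…,m}` is partitioned into good indices `G̃` and bad indices `B̃ = G̃ᶜ` with
`|G̃| > |B̃|`, then for every point `x̄`,
`‖y* - x̄‖ ≤ (2 / (|G̃| - |B̃|)) · Σ_{i∈G̃} ‖yᵢ - x̄‖`. -/
theorem geometric_median_deviation {H : Type*} [NormedAddCommGroup H]
    [InnerProductSpace ℝ H] [CompleteSpace H]
    {m : ℕ} (y : Fin m → H) (Gt : Finset (Fin m))
    (hcard : (Gtᶜ).card < Gt.card)
    (ystar : H)
    (hmin : ∀ v : H, ∑ i, ‖ystar - y i‖ ≤ ∑ i, ‖v - y i‖)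
    (xbar : H) :
    ‖ystar - xbar‖ ≤
      (2 / ((Gt.card : ℝ) - ((Gtᶜ).card : ℝ))) * ∑ i ∈ Gt, ‖y i - xbar‖ :=
  geometric_median_deviation_general y Gt hcard ystar hmin xbar
end

section
/- Let y_1,…,y_m be vectors in a real Hilbert space and let {1,…,m} = G̃ ⊎ B̃ be a partition. Let (k*, S*) minimize Σ_{j∈S} ‖y_k − y_j‖² over all k ∈ {1,…,m} and all subsets S ⊆ {1,…,m} with |S| = ⌈3m/4⌉. If ⌈3m/4⌉ > 3|B̃|, then for every point x̄ in the space, ‖y_{k*} − x̄‖² ≤ (2 Σ_{i∈S*} ‖y_{k*} − y_i‖² + 2 Σ_{i∈G̃} ‖y_i − x̄‖²) / (⌈3m/4⌉ − 3|B̃|). -/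
/-!
For every good index `i ∈ S*`, the triangle inequality and `(a + b)² ≤ 2(a² + b²)` give
`‖y_{k*} - x̄‖² ≤ 2‖y_{k*} - y_i‖² + 2‖y_i - x̄‖²`. Summing over the good indices of `S*`, of which
there are at least `|S*| - |B̃| ≥ ⌈3m/4⌉ - 3|B̃|`, gives the bound.
-/

open Finset

theorem norm_sub_sq_le_two_mul_add {E : Type*} [SeminormedAddCommGroup E] (a b c : E) :
    ‖a - c‖ ^ 2 ≤ 2 * ‖a - b‖ ^ 2 + 2 * ‖b - c‖ ^ 2 :=
  calc ‖a - c‖ ^ 2 ≤ (‖a - b‖ + ‖b - c‖) ^ 2 :=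
        pow_le_pow_left₀ (norm_nonneg _) (norm_sub_le_norm_sub_add_norm_sub a b c) 2
    _ ≤ 2 * (‖a - b‖ ^ 2 + ‖b - c‖ ^ 2) := add_sq_le
    _ = 2 * ‖a - b‖ ^ 2 + 2 * ‖b - c‖ ^ 2 := mul_add _ _ _

theorem Finset.card_le_card_inter_add_card_compl {α : Type*} [Fintype α] [DecidableEq α]
    (s t : Finset α) : #s ≤ #(s ∩ t) + #tᶜ := by
  simpa only [sdiff_compl, inf_eq_inter] using card_le_card_sdiff_add_card (s := s) (t := tᶜ)

theorem card_inter_mul_norm_sub_sq_le {ι E : Type*} [DecidableEq ι] [SeminormedAddCommGroup E]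
    (y : ι → E) (S G : Finset ι) (z x : E) :
    #(S ∩ G) * ‖z - x‖ ^ 2 ≤ 2 * ∑ i ∈ S, ‖z - y i‖ ^ 2 + 2 * ∑ i ∈ G, ‖y i - x‖ ^ 2 := by
  have hS : ∑ i ∈ S ∩ G, ‖z - y i‖ ^ 2 ≤ ∑ i ∈ S, ‖z - y i‖ ^ 2 :=
    sum_le_sum_of_subset_of_nonneg inter_subset_left fun _ _ _ ↦ by positivity
  have hG : ∑ i ∈ S ∩ G, ‖y i - x‖ ^ 2 ≤ ∑ i ∈ G, ‖y i - x‖ ^ 2 :=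
    sum_le_sum_of_subset_of_nonneg inter_subset_right fun _ _ _ ↦ by positivity
  calc (#(S ∩ G) : ℝ) * ‖z - x‖ ^ 2 = ∑ _i ∈ S ∩ G, ‖z - x‖ ^ 2 := by
        rw [sum_const, nsmul_eq_mul]
    _ ≤ ∑ i ∈ S ∩ G, (2 * ‖z - y i‖ ^ 2 + 2 * ‖y i - x‖ ^ 2) :=
        sum_le_sum fun i _ ↦ norm_sub_sq_le_two_mul_add z (y i) x
    _ = 2 * ∑ i ∈ S ∩ G, ‖z - y i‖ ^ 2 + 2 * ∑ i ∈ S ∩ G, ‖y i - x‖ ^ 2 := by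
        rw [sum_add_distrib, mul_sum, mul_sum]
    _ ≤ 2 * ∑ i ∈ S, ‖z - y i‖ ^ 2 + 2 * ∑ i ∈ G, ‖y i - x‖ ^ 2 := by linarith

theorem krum_deviation_general {H : Type*} [NormedAddCommGroup H]
    {m : ℕ} (y : Fin m → H) (Gt : Finset (Fin m))
    (kstar : Fin m) (Sstar : Finset (Fin m))
    (hScard : Sstar.card = (3 * m + 3) / 4)
    (hB : 3 * (Gtᶜ).card < (3 * m + 3) / 4) :
    ∀ xbar : H,
      ‖y kstar - xbar‖ ^ 2 ≤
        (2 * ∑ i ∈ Sstar, ‖y kstar - y i‖ ^ 2 + 2 * ∑ i ∈ Gt, ‖y i - xbar‖ ^ 2) /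
          ((((3 * m + 3) / 4 : ℕ) : ℝ) - 3 * ((Gtᶜ).card : ℝ)) := by
  intro xbar
  have hpos : (0 : ℝ) < ((3 * m + 3) / 4 : ℕ) - 3 * (#Gtᶜ : ℝ) := by
    rw [sub_pos]
    exact_mod_cast hB
  have hgood : (((3 * m + 3) / 4 : ℕ) : ℝ) - 3 * (#Gtᶜ : ℝ) ≤ #(Sstar ∩ Gt) := by
    have hcard : (3 * m + 3) / 4 ≤ #(Sstar ∩ Gt) + #Gtᶜ :=
      hScard ▸ Sstar.card_le_card_inter_add_card_compl Gt
    have hcard' : (((3 * m + 3) / 4 : ℕ) : ℝ) ≤ #(Sstar ∩ Gt) + #Gtᶜ := by exact_mod_cast hcard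
    linarith [(#Gtᶜ).cast_nonneg (α := ℝ)]
  rw [le_div_iff₀ hpos, mul_comm]
  calc _ ≤ (#(Sstar ∩ Gt) : ℝ) * ‖y kstar - xbar‖ ^ 2 :=
        mul_le_mul_of_nonneg_right hgood (by positivity)
    _ ≤ _ := card_inter_mul_norm_sub_sq_le y Sstar Gt (y kstar) xbar

/-- **Krum deviation bound (deterministic).**
Let `(k*, S*)` minimize `Σ_{j∈S} ‖y_k - y_j‖²` over `k ∈ {1,…,m}` and `S ⊆ {1,…,m}`
with `|S| = ⌈3m/4⌉` (written `(3m+3)/4` in natural-number division).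
If `⌈3m/4⌉ > 3|B̃|` where `B̃ = G̃ᶜ`, then for every point `x̄`,
`‖y_{k*} - x̄‖² ≤ (2 Σ_{i∈S*} ‖y_{k*} - y_i‖² + 2 Σ_{i∈G̃} ‖y_i - x̄‖²) / (⌈3m/4⌉ - 3|B̃|)`. -/
theorem krum_deviation {H : Type*} [NormedAddCommGroup H]
    [InnerProductSpace ℝ H] [CompleteSpace H]
    {m : ℕ} (y : Fin m → H) (Gt : Finset (Fin m))
    (kstar : Fin m) (Sstar : Finset (Fin m))
    (hScard : Sstar.card = (3 * m + 3) / 4)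
    (hmin : ∀ (k : Fin m) (S : Finset (Fin m)), S.card = (3 * m + 3) / 4 →
      ∑ j ∈ Sstar, ‖y kstar - y j‖ ^ 2 ≤ ∑ j ∈ S, ‖y k - y j‖ ^ 2)
    (hB : 3 * (Gtᶜ).card < (3 * m + 3) / 4) :
    ∀ xbar : H,
      ‖y kstar - xbar‖ ^ 2 ≤
        (2 * ∑ i ∈ Sstar, ‖y kstar - y i‖ ^ 2 + 2 * ∑ i ∈ Gt, ‖y i - xbar‖ ^ 2) /
          ((((3 * m + 3) / 4 : ℕ) : ℝ) - 3 * ((Gtᶜ).card : ℝ)) :=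
  krum_deviation_general y Gt kstar Sstar hScard hB
end

section
/- For every integer m ≥ 4 and every ρ̃ > 0, there exist i.i.d. real-valued random variables y_1,…,y_m with common mean μ and variance at most ρ̃² such that, with probability at least 1 − (1 − 1/m)^m ≥ 1 − 1/e ≥ 1/2, max_{1≤i≤m} (y_i − μ)² ≥ m ρ̃²/2; consequently E[ max_{1≤i≤m} (y_i − μ)² ] ≥ m ρ̃²/4. -/
/-!
Take `m` independent Bernoulli trials with success probability `1/m` and let `yᵢ` be `ρ̃√m` on a
success of trial `i` and `0` otherwise. Then `yᵢ` has mean `ρ̃/√m` and variance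
`(1 - 1/m) ρ̃² ≤ ρ̃²`, while a single success already forces
`(yᵢ - μ)² = (1 - 1/m)² m ρ̃² ≥ m ρ̃²/2` once `m ≥ 4`. Some trial succeeds with probability
`1 - (1 - 1/m)^m ≥ 1 - 1/e ≥ 1/2`, and Markov's inequality turns this into the bound on the
expectation.
-/

open MeasureTheory ProbabilityTheory unitInterval

noncomputable abbrev bernoulliTrials (ι : Type*) [Fintype ι] (p : I) : Measure (ι → Bool) :=
  Measure.pi fun _ => Ber(true, false, p)

section BernoulliTrials

variable {ι : Type*} [Fintype ι] (p : I)

lemma map_comp_eval_bernoulliTrials {β : Type*} [MeasurableSpace β] (i : ι) (g : Bool → β) :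
    (bernoulliTrials ι p).map (fun ω => g (ω i)) = Ber(g true, g false, p) := by
  have hg : Measurable g := measurable_of_countable g
  change (bernoulliTrials ι p).map (g ∘ Function.eval i) = _
  rw [← Measure.map_map hg (measurable_pi_apply i), (measurePreserving_eval _ i).map_eq,
    map_bernoulliMeasure' _ _ hg]

lemma integral_comp_eval_bernoulliTrials (i : ι) (f : Bool → ℝ) :
    ∫ ω, f (ω i) ∂bernoulliTrials ι p = p * f true + (1 - p) * f false := by
  rw [integral_comp_eval (measurable_of_finite f).aestronglyMeasurable,
    integral_bernoulliMeasure, smul_eq_mul, smul_eq_mul]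

lemma integral_cond_eval_bernoulliTrials (i : ι) (c : ℝ) :
    ∫ ω, cond (ω i) c 0 ∂bernoulliTrials ι p = p * c := by
  simp [integral_comp_eval_bernoulliTrials p i fun b => cond b c 0]

lemma integral_sq_sub_cond_eval_bernoulliTrials (i : ι) (c : ℝ) :
    ∫ ω, (cond (ω i) c 0 - p * c) ^ 2 ∂bernoulliTrials ι p = p * (1 - p) * c ^ 2 := by
  rw [integral_comp_eval_bernoulliTrials p i fun b => (cond b c 0 - p * c) ^ 2]
  simp only [cond_true, cond_false]
  ring

lemma measureReal_bernoulliTrials_exists_true :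
    (bernoulliTrials ι p).real {ω | ∃ i, ω i = true} = 1 - (1 - p) ^ Fintype.card ι := by
  have hfailures : {ω : ι → Bool | ∃ i, ω i = true} = (Set.univ.pi fun _ => {false})ᶜ := by
    ext ω; simp
  rw [hfailures, probReal_compl_eq_one_sub (.univ_pi fun _ => measurableSet_singleton false),
    measureReal_def, Measure.pi_pi, ENNReal.toReal_prod]
  simp

lemma one_sub_pow_le_measureReal_le_iSup_sq_sub_cond {ε c : ℝ} (hε : ε ≤ (c - p * c) ^ 2) :
    1 - (1 - p) ^ Fintype.card ι ≤
      (bernoulliTrials ι p).real {ω | ε ≤ ⨆ i, (cond (ω i) c 0 - p * c) ^ 2} := by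
  rw [← measureReal_bernoulliTrials_exists_true]
  refine measureReal_mono fun ω ⟨i, hi⟩ => hε.trans ?_
  refine le_trans ?_ (le_ciSup (Finite.bddAbove_range fun j => (cond (ω j) c 0 - p * c) ^ 2) i)
  simp [hi]

end BernoulliTrials

section ScaledSuccess

variable {p c ρ m : ℝ}

lemma mul_one_sub_mul_sq_le (hp : 0 ≤ p) (hpm : p * m = 1) (hc : c ^ 2 = ρ ^ 2 * m) :
    p * (1 - p) * c ^ 2 ≤ ρ ^ 2 := by
  have hvar : p * (1 - p) * c ^ 2 = (1 - p) * ρ ^ 2 := by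
    linear_combination p * (1 - p) * hc + (1 - p) * ρ ^ 2 * hpm
  nlinarith [sq_nonneg ρ]

lemma mul_sq_div_two_le_sq_sub_mul (hm : 4 ≤ m) (hpm : p * m = 1) (hc : c ^ 2 = ρ ^ 2 * m) :
    m * ρ ^ 2 / 2 ≤ (c - p * c) ^ 2 := by
  have hp : p ≤ 1 / 4 := by nlinarith
  have hsq : 1 / 2 ≤ (1 - p) ^ 2 := by nlinarith
  calc m * ρ ^ 2 / 2 = 1 / 2 * (ρ ^ 2 * m) := by ring
    _ ≤ (1 - p) ^ 2 * (ρ ^ 2 * m) := by gcongr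
    _ = (c - p * c) ^ 2 := by linear_combination -(1 - p) ^ 2 * hc

end ScaledSuccess

lemma one_sub_one_div_pow_le_one_div_exp_one {m : ℕ} (hm : 1 ≤ m) :
    (1 - 1 / (m : ℝ)) ^ m ≤ 1 / Real.exp 1 := by
  simpa [Real.exp_neg] using
    Real.one_sub_div_pow_le_exp_neg (n := m) (t := 1) (by exact_mod_cast hm)

lemma one_half_le_one_sub_one_div_exp_one : (1 : ℝ) / 2 ≤ 1 - 1 / Real.exp 1 := by
  have h2 : 2 ≤ Real.exp 1 := by linarith [Real.add_one_le_exp 1]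
  have : 1 / Real.exp 1 ≤ 1 / 2 := one_div_le_one_div_of_le two_pos h2
  linarith

theorem max_good_distance_lower_bound_general (m : ℕ) (hm : 4 ≤ m) (ρt : ℝ) :
    ∃ (Ω : Type) (_ : MeasurableSpace Ω) (P : Measure Ω),
      IsProbabilityMeasure P ∧
      ∃ (y : Fin m → Ω → ℝ) (μ₀ : ℝ),
        (∀ i, Measurable (y i)) ∧
        iIndepFun y P ∧
        (∀ i j : Fin m, P.map (y i) = P.map (y j)) ∧
        (∀ i, ∫ ω, y i ω ∂P = μ₀) ∧
        (∀ i, ∫ ω, (y i ω - μ₀) ^ 2 ∂P ≤ ρt ^ 2) ∧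
        ENNReal.ofReal (1 - (1 - 1 / (m : ℝ)) ^ m) ≤
          P {ω | (m : ℝ) * ρt ^ 2 / 2 ≤ ⨆ i : Fin m, (y i ω - μ₀) ^ 2} ∧
        1 - 1 / Real.exp 1 ≤ 1 - (1 - 1 / (m : ℝ)) ^ m ∧
        (1 : ℝ) / 2 ≤ 1 - 1 / Real.exp 1 ∧
        (m : ℝ) * ρt ^ 2 / 4 ≤ ∫ ω, (⨆ i : Fin m, (y i ω - μ₀) ^ 2) ∂P := by
  have hm4 : (4 : ℝ) ≤ m := by exact_mod_cast hm
  obtain ⟨p, hp⟩ : ∃ p : I, (p : ℝ) = 1 / m :=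
    ⟨⟨1 / m, by positivity, by rw [one_div]; exact Nat.cast_inv_le_one m⟩, rfl⟩
  have hpm : (p : ℝ) * m = 1 := by rw [hp]; field_simp
  obtain ⟨c, hc⟩ : ∃ c : ℝ, c ^ 2 = ρt ^ 2 * m :=
    ⟨ρt * √m, by rw [mul_pow, Real.sq_sqrt (by positivity)]⟩
  set P := bernoulliTrials (Fin m) p
  have hprob : 1 - (1 - 1 / (m : ℝ)) ^ m ≤
      P.real {ω | (m : ℝ) * ρt ^ 2 / 2 ≤ ⨆ i, (cond (ω i) c 0 - p * c) ^ 2} := by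
    have h := one_sub_pow_le_measureReal_le_iSup_sq_sub_cond (ι := Fin m) p
      (mul_sq_div_two_le_sq_sub_mul hm4 hpm hc)
    rw [Fintype.card_fin] at h
    rwa [← hp]
  have hexp : 1 - 1 / Real.exp 1 ≤ 1 - (1 - 1 / (m : ℝ)) ^ m := by
    linarith [one_sub_one_div_pow_le_one_div_exp_one (m := m) (by omega)]
  have hhalf := one_half_le_one_sub_one_div_exp_one
  have hmarkov := mul_meas_ge_le_integral_of_nonneg (μ := P)
    (ae_of_all _ fun ω => Real.iSup_nonneg fun i => sq_nonneg (cond (ω i) c 0 - p * c))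
    .of_finite ((m : ℝ) * ρt ^ 2 / 2)
  refine ⟨Fin m → Bool, inferInstance, P, inferInstance, fun i ω => cond (ω i) c 0, p * c,
    fun i => measurable_of_finite _,
    iIndepFun_pi (X := fun _ b => cond b c 0) fun _ => (measurable_of_finite _).aemeasurable,
    fun i j => (map_comp_eval_bernoulliTrials p i fun b => cond b c 0).trans
      (map_comp_eval_bernoulliTrials p j fun b => cond b c 0).symm,
    fun i => integral_cond_eval_bernoulliTrials p i c,
    fun i => (integral_sq_sub_cond_eval_bernoulliTrials p i c).trans_le
      (mul_one_sub_mul_sq_le p.2.1 hpm hc),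
    ENNReal.ofReal_le_of_le_toReal hprob, hexp, hhalf, ?_⟩
  calc (m : ℝ) * ρt ^ 2 / 4 = (m : ℝ) * ρt ^ 2 / 2 * (1 / 2) := by ring
    _ ≤ _ := by gcongr; linarith
    _ ≤ _ := hmarkov

/-- **Lower bound for the maximum good distance.**
For every `m ≥ 4` and `ρ̃ > 0` there exist i.i.d. real random variables `y₁,…,y_m`
with common mean `μ₀` and variance at most `ρ̃²`, such that with probability at least
`1 - (1 - 1/m)^m ≥ 1 - 1/e ≥ 1/2` we have `maxᵢ (yᵢ - μ₀)² ≥ m ρ̃²/2`; consequently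
`E[maxᵢ (yᵢ - μ₀)²] ≥ m ρ̃²/4`. -/
theorem max_good_distance_lower_bound (m : ℕ) (hm : 4 ≤ m) (ρt : ℝ) (hρt : 0 < ρt) :
    ∃ (Ω : Type) (_ : MeasurableSpace Ω) (P : Measure Ω),
      IsProbabilityMeasure P ∧
      ∃ (y : Fin m → Ω → ℝ) (μ₀ : ℝ),
        (∀ i, Measurable (y i)) ∧
        iIndepFun y P ∧
        (∀ i j : Fin m, P.map (y i) = P.map (y j)) ∧
        (∀ i, ∫ ω, y i ω ∂P = μ₀) ∧
        (∀ i, ∫ ω, (y i ω - μ₀) ^ 2 ∂P ≤ ρt ^ 2) ∧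
        ENNReal.ofReal (1 - (1 - 1 / (m : ℝ)) ^ m) ≤
          P {ω | (m : ℝ) * ρt ^ 2 / 2 ≤ ⨆ i : Fin m, (y i ω - μ₀) ^ 2} ∧
        1 - 1 / Real.exp 1 ≤ 1 - (1 - 1 / (m : ℝ)) ^ m ∧
        (1 : ℝ) / 2 ≤ 1 - 1 / Real.exp 1 ∧
        (m : ℝ) * ρt ^ 2 / 4 ≤ ∫ ω, (⨆ i : Fin m, (y i ω - μ₀) ^ 2) ∂P :=
  max_good_distance_lower_bound_general m hm ρt
end

section
/- (Theorem III, lower bound.) For every integer n ≥ 1, every δ ∈ (0, 1/2] such that δn is a positive integer, every μ ∈ (0, 1], every ζ > 0, and every function Alg mapping n-tuples of functions ℝ → ℝ to points of ℝ, there exist functions f_1,…,f_n : ℝ → ℝ, each twice differentiable, 1-smooth (derivative 1-Lipschitz) and μ-strongly convex, and a set G ⊆ {1,…,n} with |G| ≥ (1−δ)n, such that, writing f := (1/|G|) Σ_{i∈G} f_i and x_out := Alg(f_1,…,f_n): (i) (1/|G|) Σ_{i∈G} |f_i′(x) − f′(x)|² ≤ ζ² for all x ∈ ℝ; (ii) f(x_out)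 − inf_x f(x) ≥ δζ²/(8μ); and (iii) |f′(x_out)|² ≥ δζ²/4. -/
/-!
Take every worker's loss to be the quadratic `μ/2 (x - aᵢ)²`, with `aᵢ = c` on a set `S` of
`δn` workers and `aᵢ = 0` elsewhere. The adversary may declare either `S` Byzantine (so the good
objective is minimised at `0` and the good workers agree), or nobody Byzantine (so the objective
is minimised at `δc` and the heterogeneity is `μ²δ(1-δ)c²`). The algorithm sees the same tuple in
both cases, so its output lies at distance at least `δc/2` from one of the two minimisers. With
`μ²δc² = ζ²` both scenarios satisfy the heterogeneity bound, and in the one where the output is far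
the squared gradient is `μ²(x - m)² ≥ μ²δ²c²/4 = δζ²/4`, while the suboptimality is
`μ/2 (x - m)² ≥ δζ²/(8μ)`.
-/

open Finset
open scoped BigOperators

noncomputable def centeredQuadratic (μ a x : ℝ) : ℝ := μ / 2 * (x - a) ^ 2

theorem hasDerivAt_centeredQuadratic (μ a x : ℝ) :
    HasDerivAt (centeredQuadratic μ a) (μ * (x - a)) x := by
  have h : HasDerivAt (fun y : ℝ => y - a) 1 x := (hasDerivAt_id' x).sub_const a
  refine ((h.fun_pow 2).const_mul (μ / 2)).congr_deriv ?_
  push_cast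
  ring

theorem deriv_centeredQuadratic (μ a : ℝ) :
    deriv (centeredQuadratic μ a) = fun x => μ * (x - a) :=
  funext fun x => (hasDerivAt_centeredQuadratic μ a x).deriv

theorem centeredQuadratic_expansion (μ a x y : ℝ) :
    centeredQuadratic μ a y =
      centeredQuadratic μ a x + μ * (x - a) * (y - x) + μ / 2 * (y - x) ^ 2 := by
  unfold centeredQuadratic
  ring

theorem centeredQuadratic_smooth_stronglyConvex {μ : ℝ} (hμ : |μ| ≤ 1) (a : ℝ) :
    Differentiable ℝ (centeredQuadratic μ a) ∧
      Differentiable ℝ (deriv (centeredQuadratic μ a)) ∧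
      (∀ x y : ℝ, |deriv (centeredQuadratic μ a) x - deriv (centeredQuadratic μ a) y|
        ≤ 1 * |x - y|) ∧
      (∀ x y : ℝ, centeredQuadratic μ a x + deriv (centeredQuadratic μ a) x * (y - x) +
        μ / 2 * (y - x) ^ 2 ≤ centeredQuadratic μ a y) := by
  rw [deriv_centeredQuadratic]
  refine ⟨fun x => (hasDerivAt_centeredQuadratic μ a x).differentiableAt, by fun_prop,
    fun x y => ?_, fun x y => (centeredQuadratic_expansion μ a x y).ge⟩
  rw [← mul_sub, sub_sub_sub_cancel_right, abs_mul]
  exact mul_le_mul_of_nonneg_right hμ (abs_nonneg _)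

theorem sq_sub_le_four_mul_sq_sub_or (x m₁ m₂ : ℝ) :
    (m₁ - m₂) ^ 2 ≤ 4 * (x - m₁) ^ 2 ∨ (m₁ - m₂) ^ 2 ≤ 4 * (x - m₂) ^ 2 := by
  by_contra! h
  nlinarith [sq_nonneg (x - m₁ + (x - m₂))]

theorem exists_finset_fin_card_eq_mul {n : ℕ} {δ : ℝ} (hδ : δ < 1)
    (hδn : ∃ q : ℕ, 0 < q ∧ (q : ℝ) = δ * n) :
    0 < δ ∧ ∃ S : Finset (Fin n), (#S : ℝ) = δ * n ∧ (1 - δ) * n ≤ #Sᶜ ∧ Sᶜ.Nonempty := by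
  obtain ⟨q, hq, hqδ⟩ := hδn
  have hn : 0 < n := Nat.pos_of_ne_zero fun h => by simp [h] at hqδ; omega
  have hδ0 : 0 < δ := pos_of_mul_pos_left (hqδ ▸ Nat.cast_pos.2 hq) n.cast_nonneg
  have hqn : q < n := by
    have : (0 : ℝ) < n := Nat.cast_pos.2 hn
    exact_mod_cast (show (q : ℝ) < n by nlinarith)
  obtain ⟨S, -, hS⟩ := exists_subset_card_eq (s := (univ : Finset (Fin n))) (by simpa using hqn.le)
  refine ⟨hδ0, S, hS ▸ hqδ, ?_, ?_⟩
  · rw [card_compl, Fintype.card_fin, hS, Nat.cast_sub hqn.le, hqδ]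
    exact le_of_eq (by ring)
  · rw [← card_pos, card_compl, Fintype.card_fin, hS]
    omega

section Averages

variable {ι : Type*}

theorem inv_card_mul_sum_eq_expect (G : Finset ι) (g : ι → ℝ) :
    (#G : ℝ)⁻¹ * ∑ i ∈ G, g i = 𝔼 i ∈ G, g i := by
  rw [expect_eq_sum_div_card, div_eq_inv_mul]

theorem inv_card_mul_sum_centeredQuadratic {G : Finset ι} (hG : G.Nonempty) (μ : ℝ)
    (a : ι → ℝ) (x : ℝ) :
    (#G : ℝ)⁻¹ * ∑ j ∈ G, centeredQuadratic μ (a j) x =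
      centeredQuadratic μ (𝔼 j ∈ G, a j) x + μ / 2 * 𝔼 j ∈ G, (a j - 𝔼 k ∈ G, a k) ^ 2 := by
  rw [inv_card_mul_sum_eq_expect]
  set m := 𝔼 k ∈ G, a k
  have hsplit : ∀ j, centeredQuadratic μ (a j) x =
      centeredQuadratic μ m x + μ * (x - m) * (m - a j) + μ / 2 * (a j - m) ^ 2 := by
    intro j; unfold centeredQuadratic; ring
  have hcentered : 𝔼 j ∈ G, (m - a j) = 0 := by
    rw [expect_sub_distrib, expect_const hG, sub_self]
  simp only [hsplit, expect_add_distrib, expect_const hG, ← mul_expect, hcentered, mul_zero,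
    add_zero]

theorem Fintype.expect_ite_mem_eq [Fintype ι] [Nonempty ι] [DecidableEq ι] {S : Finset ι}
    {θ : ℝ} (hθ : (#S : ℝ) = θ * Fintype.card ι) (u v : ℝ) :
    𝔼 i, (if i ∈ S then u else v) = θ * u + (1 - θ) * v := by
  rw [Fintype.expect_eq_sum_div_card, Finset.sum_ite]
  have hcompl : #{i | i ∉ S} = Fintype.card ι - #S := by
    rw [filter_notMem_eq_sdiff, ← compl_eq_univ_sdiff, card_compl]
  have hcard : (Fintype.card ι : ℝ) ≠ 0 := Nat.cast_ne_zero.2 Fintype.card_ne_zero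
  simp only [sum_const, nsmul_eq_mul, filter_mem_eq_inter, univ_inter, hcompl,
    Nat.cast_sub (card_le_univ S), hθ]
  field_simp

theorem centeredQuadratic_lower_bound {G : Finset ι} (hG : G.Nonempty) {μ : ℝ}
    (hμ : 0 < μ) (a : ι → ℝ) {δ ζ x : ℝ}
    (hvar : μ ^ 2 * 𝔼 i ∈ G, (a i - 𝔼 j ∈ G, a j) ^ 2 ≤ ζ ^ 2)
    (hfar : δ * ζ ^ 2 ≤ 4 * μ ^ 2 * (x - 𝔼 j ∈ G, a j) ^ 2) :
    (∀ z : ℝ,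
        (#G : ℝ)⁻¹ * ∑ i ∈ G, |deriv (centeredQuadratic μ (a i)) z -
          deriv (fun w => (#G : ℝ)⁻¹ * ∑ j ∈ G, centeredQuadratic μ (a j) w) z| ^ 2 ≤ ζ ^ 2) ∧
      (δ * ζ ^ 2 / (8 * μ) ≤
        (#G : ℝ)⁻¹ * ∑ j ∈ G, centeredQuadratic μ (a j) x -
          ⨅ z : ℝ, (#G : ℝ)⁻¹ * ∑ j ∈ G, centeredQuadratic μ (a j) z) ∧
      δ * ζ ^ 2 / 4 ≤
        |deriv (fun w => (#G : ℝ)⁻¹ * ∑ j ∈ G, centeredQuadratic μ (a j) w) x| ^ 2 := by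
  simp only [inv_card_mul_sum_centeredQuadratic hG]
  set m := 𝔼 j ∈ G, a j
  set V := 𝔼 i ∈ G, (a i - m) ^ 2
  have hderiv : deriv (fun w => centeredQuadratic μ m w + μ / 2 * V) = fun w => μ * (w - m) :=
    funext fun w => ((hasDerivAt_centeredQuadratic μ m w).add_const _).deriv
  have hinf : ⨅ z, centeredQuadratic μ m z + μ / 2 * V = μ / 2 * V := by
    have hle : ∀ z, μ / 2 * V ≤ centeredQuadratic μ m z + μ / 2 * V := fun z => by
      unfold centeredQuadratic; nlinarith [sq_nonneg (z - m)]
    refine le_antisymm ?_ (le_ciInf hle)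
    simpa [centeredQuadratic] using ciInf_le ⟨_, Set.forall_mem_range.2 hle⟩ m
  simp only [hderiv, hinf, deriv_centeredQuadratic, add_sub_cancel_right, sq_abs]
  refine ⟨fun z => ?_, ?_, by nlinarith⟩
  · calc (#G : ℝ)⁻¹ * ∑ i ∈ G, (μ * (z - a i) - μ * (z - m)) ^ 2
        = μ ^ 2 * V := by
          rw [inv_card_mul_sum_eq_expect, mul_expect]
          exact expect_congr rfl fun i _ => by ring
      _ ≤ ζ ^ 2 := hvar
  · rw [div_le_iff₀ (by positivity)]
    unfold centeredQuadratic
    nlinarith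

end Averages

theorem byzantine_noniid_lower_bound_general
    (n : ℕ) (δ : ℝ) (hδ : δ ≤ 1 / 2)
    (hδn : ∃ q : ℕ, 0 < q ∧ (q : ℝ) = δ * n)
    (μ : ℝ) (hμ0 : 0 < μ) (hμ1 : μ ≤ 1)
    (ζ : ℝ)
    (Alg : (Fin n → (ℝ → ℝ)) → ℝ) :
    ∃ (f : Fin n → ℝ → ℝ) (G : Finset (Fin n)),
      -- regularity: twice differentiable, 1-smooth, μ-strongly convex
      (∀ i, Differentiable ℝ (f i) ∧ Differentiable ℝ (deriv (f i)) ∧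
        (∀ a b : ℝ, |deriv (f i) a - deriv (f i) b| ≤ 1 * |a - b|) ∧
        (∀ a b : ℝ, f i a + deriv (f i) a * (b - a) + (μ / 2) * (b - a) ^ 2 ≤ f i b)) ∧
      -- at least (1-δ)n good workers
      (1 - δ) * n ≤ (G.card : ℝ) ∧
      -- (i) heterogeneity bound for the good objective
      (∀ z : ℝ,
        (G.card : ℝ)⁻¹ * ∑ i ∈ G,
            |deriv (f i) z - deriv (fun w => (G.card : ℝ)⁻¹ * ∑ j ∈ G, f j w) z| ^ 2
          ≤ ζ ^ 2) ∧
      -- (ii) suboptimality lower bound at the algorithm's output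
      (δ * ζ ^ 2 / (8 * μ) ≤
        (G.card : ℝ)⁻¹ * ∑ j ∈ G, f j (Alg f) -
          ⨅ z : ℝ, (G.card : ℝ)⁻¹ * ∑ j ∈ G, f j z) ∧
      -- (iii) squared gradient lower bound at the algorithm's output
      δ * ζ ^ 2 / 4 ≤
        |deriv (fun w => (G.card : ℝ)⁻¹ * ∑ j ∈ G, f j w) (Alg f)| ^ 2 := by
  obtain ⟨hδ0, S, hS, hScard, hSc⟩ := exists_finset_fin_card_eq_mul (by linarith) hδn
  have : Nonempty (Fin n) := ⟨hSc.choose⟩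
  obtain ⟨c, hc⟩ : ∃ c, μ ^ 2 * δ * c ^ 2 = ζ ^ 2 := ⟨ζ / (μ * √δ), by
    rw [div_pow, mul_pow, Real.sq_sqrt hδ0.le]; field_simp⟩
  set a : Fin n → ℝ := fun i => if i ∈ S then c else 0
  have hreg i := centeredQuadratic_smooth_stronglyConvex (abs_le.2 ⟨by linarith, hμ1⟩) (a i)
  rcases sq_sub_le_four_mul_sq_sub_or (Alg fun i => centeredQuadratic μ (a i)) 0 (δ * c)
    with hfar | hfar
  · have hzero : ∀ i ∈ Sᶜ, a i = 0 := fun i hi => if_neg (mem_compl.1 hi)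
    have hmean : 𝔼 i ∈ Sᶜ, a i = 0 := expect_eq_zero hzero
    refine ⟨_, Sᶜ, hreg, hScard, centeredQuadratic_lower_bound hSc hμ0 a ?_ ?_⟩
    · rw [hmean, expect_eq_zero fun i hi => by simp [hzero i hi], mul_zero]
      positivity
    · rw [hmean]; nlinarith
  · have hθ : (#S : ℝ) = δ * Fintype.card (Fin n) := by rwa [Fintype.card_fin]
    have hmean : 𝔼 i, a i = δ * c := by
      rw [Fintype.expect_ite_mem_eq hθ]; ring
    have hvar : 𝔼 i, (a i - δ * c) ^ 2 = δ * (1 - δ) * c ^ 2 := by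
      simp only [a, apply_ite (fun t : ℝ => (t - δ * c) ^ 2), Fintype.expect_ite_mem_eq hθ]
      ring
    refine ⟨_, univ, hreg, ?_, centeredQuadratic_lower_bound univ_nonempty hμ0 a ?_ ?_⟩
    · rw [card_univ, Fintype.card_fin]; nlinarith
    · rw [hmean, hvar]; nlinarith
    · rw [hmean]; nlinarith

/-- **Theorem III (lower bound for heterogeneous Byzantine robust optimization).**
For every `n`, every `δ ∈ (0,1/2]` with `δn` a positive integer, every `μ ∈ (0,1]`,
every `ζ > 0` and every deterministic algorithm `Alg` mapping `n`-tuples of functions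
`ℝ → ℝ` to a point of `ℝ`, there exist `1`-smooth, `μ`-strongly convex, twice
differentiable functions `f₁,…,f_n` and a good set `G` with `|G| ≥ (1-δ)n`, such that
the good objective `f = (1/|G|) Σ_{i∈G} f_i` satisfies the `ζ²` heterogeneity bound,
while the output `x_out = Alg(f₁,…,f_n)` suffers suboptimality `≥ δζ²/(8μ)` and
squared gradient norm `≥ δζ²/4`. -/
theorem byzantine_noniid_lower_bound
    (n : ℕ) (hn : 1 ≤ n) (δ : ℝ) (hδ0 : 0 < δ) (hδ : δ ≤ 1 / 2)
    (hδn : ∃ q : ℕ, 0 < q ∧ (q : ℝ) = δ * n)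
    (μ : ℝ) (hμ0 : 0 < μ) (hμ1 : μ ≤ 1)
    (ζ : ℝ) (hζ : 0 < ζ)
    (Alg : (Fin n → (ℝ → ℝ)) → ℝ) :
    ∃ (f : Fin n → ℝ → ℝ) (G : Finset (Fin n)),
      -- regularity: twice differentiable, 1-smooth, μ-strongly convex
      (∀ i, Differentiable ℝ (f i) ∧ Differentiable ℝ (deriv (f i)) ∧
        (∀ a b : ℝ, |deriv (f i) a - deriv (f i) b| ≤ 1 * |a - b|) ∧
        (∀ a b : ℝ, f i a + deriv (f i) a * (b - a) + (μ / 2) * (b - a) ^ 2 ≤ f i b)) ∧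
      -- at least (1-δ)n good workers
      (1 - δ) * n ≤ (G.card : ℝ) ∧
      -- (i) heterogeneity bound for the good objective
      (∀ z : ℝ,
        (G.card : ℝ)⁻¹ * ∑ i ∈ G,
            |deriv (f i) z - deriv (fun w => (G.card : ℝ)⁻¹ * ∑ j ∈ G, f j w) z| ^ 2
          ≤ ζ ^ 2) ∧
      -- (ii) suboptimality lower bound at the algorithm's output
      (δ * ζ ^ 2 / (8 * μ) ≤
        (G.card : ℝ)⁻¹ * ∑ j ∈ G, f j (Alg f) -
          ⨅ z : ℝ, (G.card : ℝ)⁻¹ * ∑ j ∈ G, f j z) ∧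
      -- (iii) squared gradient lower bound at the algorithm's output
      δ * ζ ^ 2 / 4 ≤
        |deriv (fun w => (G.card : ℝ)⁻¹ * ∑ j ∈ G, f j w) (Alg f)| ^ 2 :=
  byzantine_noniid_lower_bound_general n δ hδ hδn μ hμ0 hμ1 ζ Alg
end

section
/- (Descent bound.) Let f : ℝ^d → ℝ be differentiable with L-Lipschitz gradient, let 0 < η ≤ 1/L, let x, m, m̄ ∈ ℝ^d be arbitrary, and set x' := x − η m. Then f(x') ≤ f(x) − (η/2) ‖∇f(x)‖² + η ‖m̄ − ∇f(x)‖² + η ‖m − m̄‖². -/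
/-! Restricted to the segment `t ↦ x + t • v`, the Lipschitz bound on the gradient makes
`t ↦ f (x + t • v) - t ⟪∇f x, v⟫ - (L/2) t² ‖v‖²` nonincreasing for `t ≥ 0`, which is the
quadratic upper bound of an `L`-smooth function. For `v = -η m` with `η L ≤ 1` this gives
`f (x - η m) ≤ f x - (η/2)‖∇f x‖² + (η/2)‖m - ∇f x‖²`, and `‖m - ∇f x‖²` splits through `m̄`
at the cost of a factor `2`. -/

open scoped RealInnerProductSpace

section Smooth

variable {E : Type*} [NormedAddCommGroup E] [InnerProductSpace ℝ E] [CompleteSpace E]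
  {f : E → ℝ}

theorem Differentiable.hasDerivAt_comp_add_smul (hf : Differentiable ℝ f) (x v : E) (t : ℝ) :
    HasDerivAt (fun s : ℝ => f (x + s • v)) ⟪gradient f (x + t • v), v⟫ t := by
  have hline : HasDerivAt (fun s : ℝ => x + s • v) v t := by
    simpa using ((hasDerivAt_id t).smul_const v).const_add x
  simpa [Function.comp_def] using (hf _).hasGradientAt.hasFDerivAt.comp_hasDerivAt t hline

theorem image_add_le_of_lipschitz_gradient {L : ℝ} (hf : Differentiable ℝ f)
    (hlip : ∀ a b : E, ‖gradient f a - gradient f b‖ ≤ L * ‖a - b‖) (x v : E) :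
    f (x + v) ≤ f x + ⟪gradient f x, v⟫ + L / 2 * ‖v‖ ^ 2 := by
  set φ : ℝ → ℝ := fun t => f (x + t • v) - t * ⟪gradient f x, v⟫ - L / 2 * t ^ 2 * ‖v‖ ^ 2
  set φ' : ℝ → ℝ := fun t =>
    ⟪gradient f (x + t • v), v⟫ - ⟪gradient f x, v⟫ - L * t * ‖v‖ ^ 2
  have hφ : ∀ t, HasDerivAt φ (φ' t) t := fun t =>
    (((hf.hasDerivAt_comp_add_smul x v t).sub ((hasDerivAt_id t).mul_const _)).sub
      (((hasDerivAt_pow 2 t).const_mul (L / 2)).mul_const (‖v‖ ^ 2))).congr_deriv (by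
        simp only [φ', Nat.cast_ofNat]; ring)
  have hφ'_nonpos : ∀ t ∈ interior (Set.Ici (0 : ℝ)), φ' t ≤ 0 := fun t ht => by
    rw [interior_Ici] at ht
    have hgrad : ‖gradient f (x + t • v) - gradient f x‖ ≤ L * (t * ‖v‖) := by
      simpa [norm_smul, abs_of_pos (Set.mem_Ioi.1 ht)] using hlip (x + t • v) x
    calc φ' t = ⟪gradient f (x + t • v) - gradient f x, v⟫ - L * t * ‖v‖ ^ 2 := by
          simp only [φ', inner_sub_left]
      _ ≤ ‖gradient f (x + t • v) - gradient f x‖ * ‖v‖ - L * t * ‖v‖ ^ 2 := by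
          gcongr; exact real_inner_le_norm _ _
      _ ≤ L * (t * ‖v‖) * ‖v‖ - L * t * ‖v‖ ^ 2 := by gcongr
      _ = 0 := by ring
  have hanti : AntitoneOn φ (Set.Ici 0) :=
    antitoneOn_of_hasDerivWithinAt_nonpos (convex_Ici 0)
      (fun t _ => (hφ t).continuousAt.continuousWithinAt)
      (fun t _ => (hφ t).hasDerivWithinAt) hφ'_nonpos
  have h10 : φ 1 ≤ φ 0 := hanti (Set.mem_Ici.2 le_rfl) (Set.mem_Ici.2 zero_le_one) zero_le_one
  simp only [φ, one_smul, zero_smul, add_zero] at h10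
  linarith

theorem image_sub_smul_le_of_lipschitz_gradient {L η : ℝ} (hf : Differentiable ℝ f)
    (hlip : ∀ a b : E, ‖gradient f a - gradient f b‖ ≤ L * ‖a - b‖)
    (hη : 0 ≤ η) (hηL : η * L ≤ 1) (x m : E) :
    f (x - η • m) ≤ f x - η / 2 * ‖gradient f x‖ ^ 2 + η / 2 * ‖m - gradient f x‖ ^ 2 := by
  have hstep := image_add_le_of_lipschitz_gradient hf hlip x (-(η • m))
  rw [← sub_eq_add_neg, inner_neg_right, real_inner_smul_right, norm_neg, norm_smul,
    Real.norm_of_nonneg hη] at hstep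
  have hquad : L / 2 * (η * ‖m‖) ^ 2 ≤ η / 2 * ‖m‖ ^ 2 := by
    have : η * (η * L) * ‖m‖ ^ 2 ≤ η * 1 * ‖m‖ ^ 2 := by gcongr
    linarith
  have hexpand := norm_sub_sq_real m (gradient f x)
  rw [real_inner_comm] at hexpand
  linear_combination hstep + hquad - η / 2 * hexpand

end Smooth

theorem norm_sub_sq_le_two_mul {E : Type*} [SeminormedAddCommGroup E] (a b c : E) :
    ‖a - c‖ ^ 2 ≤ 2 * (‖a - b‖ ^ 2 + ‖b - c‖ ^ 2) :=
  (pow_le_pow_left₀ (norm_nonneg _) (norm_sub_le_norm_sub_add_norm_sub a b c) 2).trans add_sq_le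

theorem descent_bound_general {d : ℕ} (f : EuclideanSpace ℝ (Fin d) → ℝ) (L η : ℝ)
    (hdiff : Differentiable ℝ f)
    (hlip : ∀ a b : EuclideanSpace ℝ (Fin d),
      ‖gradient f a - gradient f b‖ ≤ L * ‖a - b‖)
    (hη_pos : 0 < η) (hη : η ≤ 1 / L)
    (x m mbar : EuclideanSpace ℝ (Fin d)) :
    f (x - η • m) ≤
      f x - (η / 2) * ‖gradient f x‖ ^ 2 + η * ‖mbar - gradient f x‖ ^ 2
        + η * ‖m - mbar‖ ^ 2 := by
  have hL : 0 < L := one_div_pos.mp (hη_pos.trans_le hη)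
  have hηL : η * L ≤ 1 := (le_div_iff₀ hL).mp (by simpa using hη)
  have hstep := image_sub_smul_le_of_lipschitz_gradient hdiff hlip hη_pos.le hηL x m
  have hsplit := norm_sub_sq_le_two_mul m mbar (gradient f x)
  linear_combination hstep + η / 2 * hsplit

/-- **Descent bound.** If `f : ℝ^d → ℝ` is differentiable with `L`-Lipschitz gradient,
`0 < η ≤ 1/L`, and `x' = x - η • m`, then
`f x' ≤ f x - (η/2)‖∇f x‖² + η‖m̄ - ∇f x‖² + η‖m - m̄‖²`. -/
theorem descent_bound {d : ℕ} (f : EuclideanSpace ℝ (Fin d) → ℝ) (L η : ℝ)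
    (hL : 0 < L)
    (hdiff : Differentiable ℝ f)
    (hlip : ∀ a b : EuclideanSpace ℝ (Fin d),
      ‖gradient f a - gradient f b‖ ≤ L * ‖a - b‖)
    (hη_pos : 0 < η) (hη : η ≤ 1 / L)
    (x m mbar : EuclideanSpace ℝ (Fin d)) :
    f (x - η • m) ≤
      f x - (η / 2) * ‖gradient f x‖ ^ 2 + η * ‖mbar - gradient f x‖ ^ 2
        + η * ‖m - mbar‖ ^ 2 :=
  descent_bound_general f L η hdiff hlip hη_pos hη x m mbar
end

section
/- (Momentum deviation recursion.) Let (F_t)_{t≥1} be a filtration on a probability space, let α ∈ [0,1] and σ ≥ 0, and let (ε_t)_{t≥1} be square-integrable random vectors in a real Hilbert space such that ε_t is F_t-measurable for each t, E‖ε_1‖² ≤ σ², and for t ≥ 2, E[ε_t | F_{t−1}] = 0 and E[‖ε_t‖² | F_{t−1}] ≤ σ² almost surely. Define d_1 := ε_1 and d_t := (1−α) d_{t−1} + α ε_t for t ≥ 2. Then for every t ≥ 1, E‖d_t‖² ≤ σ² (α + (1−α)^{t−1}). -/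
/-!
Since `d_t` is `F_t`-measurable and `ε_{t+1}` is conditionally centred given `F_t`, the pull-out
property kills the cross term: `E⟪d_t, ε_{t+1}⟫ = E⟪d_t, E[ε_{t+1} | F_t]⟫ = 0`. Hence
`E‖d_{t+1}‖² = (1-α)² E‖d_t‖² + α² E‖ε_{t+1}‖²`, and the bound follows by induction on `t`
from `E‖ε_{t+1}‖² ≤ σ²` and the elementary inequality `(1-α)²(α + (1-α)^k) + α² ≤ α + (1-α)^(k+1)`.
-/

open MeasureTheory
open scoped RealInnerProductSpace

section

variable {H : Type*} [NormedAddCommGroup H] [InnerProductSpace ℝ H]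
  {Ω : Type*} {m m0 : MeasurableSpace Ω} {P : Measure Ω}

theorem norm_smul_add_smul_sq_real (a b : ℝ) (x y : H) :
    ‖a • x + b • y‖ ^ 2 = a ^ 2 * ‖x‖ ^ 2 + 2 * a * b * ⟪x, y⟫ + b ^ 2 * ‖y‖ ^ 2 := by
  rw [norm_add_sq_real, norm_smul, norm_smul, real_inner_smul_left, real_inner_smul_right,
    mul_pow, mul_pow, Real.norm_eq_abs, Real.norm_eq_abs, sq_abs, sq_abs]
  ring

theorem MeasureTheory.MemLp.integrable_inner {f g : Ω → H} (hf : MemLp f 2 P)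
    (hg : MemLp g 2 P) : Integrable (fun ω => ⟪f ω, g ω⟫) P :=
  memLp_one_iff_integrable.1 <| (innerSL ℝ).memLp_of_bilin 1 hf hg

theorem integral_inner_eq_zero_of_condExp_eq_zero [CompleteSpace H] [IsFiniteMeasure P]
    (hm : m ≤ m0) {f g : Ω → H} (hf : MemLp f 2 P) (hg : MemLp g 2 P)
    (hfm : StronglyMeasurable[m] f) (hg0 : P[g | m] =ᵐ[P] 0) :
    ∫ ω, ⟪f ω, g ω⟫ ∂P = 0 := by
  have hpull : P[fun ω => ⟪f ω, g ω⟫ | m] =ᵐ[P] fun ω => ⟪f ω, P[g | m] ω⟫ :=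
    condExp_bilin_of_stronglyMeasurable_left (innerSL ℝ) hfm (hf.integrable_inner hg)
      (hg.integrable one_le_two)
  rw [← integral_condExp hm, integral_eq_zero_of_ae]
  filter_upwards [hpull, hg0] with ω h h0
  simp [h, h0]

theorem integral_norm_smul_add_smul_sq_of_condExp_eq_zero [CompleteSpace H] [IsFiniteMeasure P]
    (hm : m ≤ m0) {f g : Ω → H} (hf : MemLp f 2 P) (hg : MemLp g 2 P)
    (hfm : StronglyMeasurable[m] f) (hg0 : P[g | m] =ᵐ[P] 0) (a b : ℝ) :
    ∫ ω, ‖a • f ω + b • g ω‖ ^ 2 ∂P = a ^ 2 * ∫ ω, ‖f ω‖ ^ 2 ∂P + b ^ 2 * ∫ ω, ‖g ω‖ ^ 2 ∂P := by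
  have hf2 := hf.norm.integrable_sq.const_mul (a ^ 2)
  have hfg := (hf.integrable_inner hg).const_mul (2 * a * b)
  have hf2fg : Integrable (fun ω => a ^ 2 * ‖f ω‖ ^ 2 + 2 * a * b * ⟪f ω, g ω⟫) P := hf2.add hfg
  have hg2 := hg.norm.integrable_sq.const_mul (b ^ 2)
  simp_rw [norm_smul_add_smul_sq_real]
  rw [integral_add hf2fg hg2, integral_add hf2 hfg, integral_const_mul, integral_const_mul,
    integral_const_mul, integral_inner_eq_zero_of_condExp_eq_zero hm hf hg hfm hg0]
  ring

theorem integral_le_of_condExp_le [IsProbabilityMeasure P] (hm : m ≤ m0) {f : Ω → ℝ} {c : ℝ}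
    (h : ∀ᵐ ω ∂P, P[f | m] ω ≤ c) : ∫ ω, f ω ∂P ≤ c := by
  rw [← integral_condExp hm]
  simpa using integral_mono_ae integrable_condExp (integrable_const c) h

end

theorem momentum_bound_succ {α s V W : ℝ} (hα0 : 0 ≤ α) (hα1 : α ≤ 1) (hs : 0 ≤ s) {k : ℕ}
    (hV : V ≤ s * (α + (1 - α) ^ k)) (hW : W ≤ s) :
    (1 - α) ^ 2 * V + α ^ 2 * W ≤ s * (α + (1 - α) ^ (k + 1)) := by
  have h1α : 0 ≤ 1 - α := sub_nonneg.2 hα1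
  calc (1 - α) ^ 2 * V + α ^ 2 * W ≤ (1 - α) ^ 2 * (s * (α + (1 - α) ^ k)) + α ^ 2 * s := by
        gcongr
    _ = s * (α + (1 - α) ^ (k + 1)) - s * α * (α * (1 - α) + (1 - α) ^ (k + 1)) := by ring
    _ ≤ s * (α + (1 - α) ^ (k + 1)) :=
        sub_le_self _ (mul_nonneg (mul_nonneg hs hα0)
          (add_nonneg (mul_nonneg hα0 h1α) (pow_nonneg h1α _)))

theorem momentum_deviation_recursion_general
    {H : Type*} [NormedAddCommGroup H] [InnerProductSpace ℝ H] [CompleteSpace H]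
    {Ω : Type*} [m0 : MeasurableSpace Ω] (P : Measure Ω) [IsProbabilityMeasure P]
    (F : ℕ → MeasurableSpace Ω) (hFle : ∀ t, F t ≤ m0) (hFmono : Monotone F)
    (α σ : ℝ) (hα0 : 0 ≤ α) (hα1 : α ≤ 1)
    (ε : ℕ → Ω → H)
    (hL2 : ∀ t, 1 ≤ t → MemLp (ε t) 2 P)
    (hadapted : ∀ t, 1 ≤ t → StronglyMeasurable[F t] (ε t))
    (hε1 : ∫ ω, ‖ε 1 ω‖ ^ 2 ∂P ≤ σ ^ 2)
    (hmean : ∀ t, 2 ≤ t → P[ε t | F (t - 1)] =ᵐ[P] fun _ => (0 : H))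
    (hvar : ∀ t, 2 ≤ t →
      ∀ᵐ ω ∂P, (P[fun ω' => ‖ε t ω'‖ ^ 2 | F (t - 1)]) ω ≤ σ ^ 2)
    (dvec : ℕ → Ω → H)
    (hd1 : dvec 1 = ε 1)
    (hdrec : ∀ t, 1 ≤ t →
      dvec (t + 1) = fun ω => (1 - α) • dvec t ω + α • ε (t + 1) ω) :
    ∀ t, 1 ≤ t → ∫ ω, ‖dvec t ω‖ ^ 2 ∂P ≤ σ ^ 2 * (α + (1 - α) ^ (t - 1)) := by
  have hreg : ∀ t, 1 ≤ t → MemLp (dvec t) 2 P ∧ StronglyMeasurable[F t] (dvec t) := by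
    intro t ht
    induction t, ht using Nat.le_induction with
    | base => exact hd1 ▸ ⟨hL2 1 le_rfl, hadapted 1 le_rfl⟩
    | succ t ht ih =>
      rw [hdrec t ht]
      exact ⟨(ih.1.const_smul _).add ((hL2 (t + 1) (by omega)).const_smul _),
        ((ih.2.mono (hFmono t.le_succ)).const_smul _).add
          ((hadapted (t + 1) (by omega)).const_smul _)⟩
  intro t ht
  induction t, ht using Nat.le_induction with
  | base => simpa [hd1] using hε1.trans (le_mul_of_one_le_right (sq_nonneg σ) (by linarith))
  | succ t ht ih =>
    have hcentred : P[ε (t + 1) | F t] =ᵐ[P] fun _ => (0 : H) := by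
      simpa using hmean (t + 1) (by omega)
    have hsecond : ∫ ω, ‖ε (t + 1) ω‖ ^ 2 ∂P ≤ σ ^ 2 :=
      integral_le_of_condExp_le (hFle t) (by simpa using hvar (t + 1) (by omega))
    rw [hdrec t ht, integral_norm_smul_add_smul_sq_of_condExp_eq_zero (hFle t) (hreg t ht).1
      (hL2 (t + 1) (by omega)) (hreg t ht).2 hcentred]
    obtain ⟨k, rfl⟩ := Nat.exists_eq_add_of_le' ht
    simpa using momentum_bound_succ hα0 hα1 (sq_nonneg σ) ih hsecond

/-- **Momentum deviation recursion.**
Let `(F_t)` be a filtration, `α ∈ [0,1]`, `σ ≥ 0`, and `(ε_t)_{t≥1}` square-integrable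
adapted random vectors in a real Hilbert space with `E‖ε₁‖² ≤ σ²` and, for `t ≥ 2`,
`E[ε_t | F_{t-1}] = 0` and `E[‖ε_t‖² | F_{t-1}] ≤ σ²` a.s.
If `d₁ = ε₁` and `d_t = (1-α) d_{t-1} + α ε_t` for `t ≥ 2`, then for every `t ≥ 1`,
`E‖d_t‖² ≤ σ² (α + (1-α)^{t-1})`. -/
theorem momentum_deviation_recursion
    {H : Type*} [NormedAddCommGroup H] [InnerProductSpace ℝ H] [CompleteSpace H]
    {Ω : Type*} [m0 : MeasurableSpace Ω] (P : Measure Ω) [IsProbabilityMeasure P]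
    (F : ℕ → MeasurableSpace Ω) (hFle : ∀ t, F t ≤ m0) (hFmono : Monotone F)
    (α σ : ℝ) (hα0 : 0 ≤ α) (hα1 : α ≤ 1) (hσ : 0 ≤ σ)
    (ε : ℕ → Ω → H)
    (hL2 : ∀ t, 1 ≤ t → MemLp (ε t) 2 P)
    (hadapted : ∀ t, 1 ≤ t → StronglyMeasurable[F t] (ε t))
    (hε1 : ∫ ω, ‖ε 1 ω‖ ^ 2 ∂P ≤ σ ^ 2)
    (hmean : ∀ t, 2 ≤ t → P[ε t | F (t - 1)] =ᵐ[P] fun _ => (0 : H))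
    (hvar : ∀ t, 2 ≤ t →
      ∀ᵐ ω ∂P, (P[fun ω' => ‖ε t ω'‖ ^ 2 | F (t - 1)]) ω ≤ σ ^ 2)
    (dvec : ℕ → Ω → H)
    (hd1 : dvec 1 = ε 1)
    (hdrec : ∀ t, 1 ≤ t →
      dvec (t + 1) = fun ω => (1 - α) • dvec t ω + α • ε (t + 1) ω) :
    ∀ t, 1 ≤ t → ∫ ω, ‖dvec t ω‖ ^ 2 ∂P ≤ σ ^ 2 * (α + (1 - α) ^ (t - 1)) :=
  momentum_deviation_recursion_general (m0 := m0) P F hFle hFmono α σ hα0 hα1 ε hL2 hadapted hε1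
    hmean hvar dvec hd1 hdrec
end
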